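/- Let D ≥ 2 and 1 ≤ M < D, and let θ ∈ (0, π/2) satisfy sin²θ = M/D. Then there exists a nonnegative integer t with t ≤ ⌈(π/4)·√(D/M)⌉ such that sin²((2t+1)θ) ≥ 1/2. -/
import Mathlib


open Real

lemma sin_sq_half_aux (x : ℝ) (h1 : π / 4 ≤ x) (h2 : x ≤ 3 * π / 4) :
    (1 : ℝ) / 2 ≤ sin x ^ 2 := by
  have hcos : cos (2 * x) ≤ 0 :=
    Real.cos_nonpos_of_pi_div_two_le_of_le (by linarith) (by linarith)
  have := Real.cos_sq x
  have hp : cos x ^ 2 + sin x ^ 2 = 1 := Real.cos_sq_add_sin_sq x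
  linarith

theorem grover_half_success_within_bound (D M : ℕ) (hD : 2 ≤ D) (hM1 : 1 ≤ M) (hMD : M < D)
    (θ : ℝ) (hθ0 : 0 < θ) (hθ1 : θ < π / 2) (hθ : sin θ ^ 2 = (M : ℝ) / D) :
    ∃ t : ℕ, t ≤ ⌈(π / 4) * Real.sqrt ((D : ℝ) / M)⌉₊ ∧
      (1 : ℝ) / 2 ≤ sin ((2 * t + 1) * θ) ^ 2 := by
  have hπ := Real.pi_pos
  have hMpos : (0:ℝ) < M := by exact_mod_cast Nat.lt_of_lt_of_le Nat.zero_lt_one hM1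
  have hDpos : (0:ℝ) < D := by positivity
  have hsin_pos : 0 < sin θ := Real.sin_pos_of_pos_of_lt_pi hθ0 (by linarith)
  have hsinθ : sin θ = Real.sqrt ((M:ℝ)/D) := by
    rw [← hθ, Real.sqrt_sq hsin_pos.le]
  have hθge : Real.sqrt ((M:ℝ)/D) ≤ θ := hsinθ ▸ Real.sin_le hθ0.le
  have hsqrt_pos : 0 < Real.sqrt ((M:ℝ)/D) := hsinθ ▸ hsin_pos
  have hsqrt_inv : Real.sqrt ((D:ℝ)/M) = 1 / Real.sqrt ((M:ℝ)/D) := by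
    rw [one_div, ← Real.sqrt_inv]
    congr 1
    field_simp
  have hinv : 1 / θ ≤ Real.sqrt ((D:ℝ)/M) := by
    rw [hsqrt_inv]
    exact one_div_le_one_div_of_le hsqrt_pos hθge
  have hbound : π / (4 * θ) ≤ π / 4 * Real.sqrt ((D:ℝ)/M) := by
    have : π / (4 * θ) = π / 4 * (1 / θ) := by field_simp
    rw [this]
    exact mul_le_mul_of_nonneg_left hinv (by positivity)
  by_cases hcase : π / 4 ≤ θ
  · refine ⟨0, Nat.zero_le _, ?_⟩
    have : ((2 : ℝ) * (0:ℕ) + 1) * θ = θ := by push_cast; ring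
    rw [this]
    exact sin_sq_half_aux θ hcase (by linarith)
  · push_neg at hcase
    set c : ℝ := (π / (4 * θ) - 1) / 2 with hc
    have hπ4θ : 1 < π / (4 * θ) := by
      rw [lt_div_iff₀ (by linarith)]
      linarith
    have hc0 : 0 < c := by simp only [hc]; linarith
    refine ⟨⌈c⌉₊, ?_, ?_⟩
    · have h1 : (⌈c⌉₊ : ℝ) < c + 1 := Nat.ceil_lt_add_one hc0.le
      have h2 : c + 1 ≤ π / (4 * θ) := by
        have : π / (8 * θ) ≥ 1 / 2 := by
          rw [ge_iff_le, le_div_iff₀ (by linarith)]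
          linarith
        have he : π / (4 * θ) = 2 * (π / (8 * θ)) := by ring
        simp only [hc]
        linarith
      have h3 : (⌈c⌉₊ : ℝ) ≤ (⌈π / 4 * Real.sqrt ((D:ℝ)/M)⌉₊ : ℝ) :=
        le_trans (le_of_lt h1) (le_trans h2 (le_trans hbound (Nat.le_ceil _)))
      exact_mod_cast h3
    · have hc1 : c ≤ (⌈c⌉₊ : ℝ) := Nat.le_ceil c
      have hc2 : (⌈c⌉₊ : ℝ) < c + 1 := Nat.ceil_lt_add_one hc0.le
      have heq : π / (4 * θ) * θ = π / 4 := by field_simp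
      apply sin_sq_half_aux
      · have : π / (4 * θ) ≤ 2 * (⌈c⌉₊ : ℝ) + 1 := by simp only [hc] at hc1; linarith
        calc π / 4 = π / (4 * θ) * θ := heq.symm
          _ ≤ (2 * (⌈c⌉₊ : ℝ) + 1) * θ := mul_le_mul_of_nonneg_right this hθ0.le
      · have h4 : 2 * (⌈c⌉₊ : ℝ) + 1 < π / (4 * θ) + 2 := by simp only [hc] at hc2; linarith
        have h5 : (2 * (⌈c⌉₊ : ℝ) + 1) * θ < (π / (4 * θ) + 2) * θ :=
          mul_lt_mul_of_pos_right h4 hθ0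
        have h6 : (π / (4 * θ) + 2) * θ = π / 4 + 2 * θ := by rw [add_mul, heq]
        linarith
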